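/- Let p be a prime, m, n ≥ 1 integers, and f = x^n + Σ_{i=0}^{n−1} a_i(t)·x^i ∈ (F_p[t])[x], where a_0(t) ∈ F_p[t] has degree exactly m and a_i(t) has degree at most m − 1 for 1 ≤ i ≤ n − 1. Then g(t) := Res_x(f, X^p − X) ∈ F_p[t] is nonzero and has degree exactly m·p. -/

import Mathlib

open Polynomial

/-- The Sylvester matrix of two polynomials `f` and `g` over a commutative ring:
a `(natDegree f + natDegree g) × (natDegree f + natDegree g)` matrix, whose first
`natDegree g` rows carry the shifted coefficient sequences of `f` (from the leading
coefficient down), and whose remaining `natDegree f` rows carry the shifted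
coefficient sequences of `g`. -/
noncomputable def sylvesterMatrix {R : Type*} [CommRing R] (f g : Polynomial R) :
    Matrix (Fin (f.natDegree + g.natDegree)) (Fin (f.natDegree + g.natDegree)) R :=
  Matrix.of fun i j =>
    if (i : ℕ) < g.natDegree then
      if (i : ℕ) ≤ (j : ℕ) ∧ (j : ℕ) ≤ (i : ℕ) + f.natDegree then
        f.coeff (f.natDegree + i - j)
      else 0
    else
      if (i : ℕ) - g.natDegree ≤ (j : ℕ) ∧ (j : ℕ) ≤ ((i : ℕ) - g.natDegree) + g.natDegree then
        g.coeff (g.natDegree + ((i : ℕ) - g.natDegree) - j)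
      else 0

/-- The resultant of two polynomials: the determinant of their Sylvester matrix. -/
noncomputable def resultant {R : Type*} [CommRing R] (f g : Polynomial R) : R :=
  (sylvesterMatrix f g).det

/-!
Since `X ^ p - X = ∏_{c ∈ 𝔽_p} (X - c)`, multiplicativity of the resultant gives
`Res_x(f, X ^ p - X) = ± ∏_{c ∈ 𝔽_p} f(c)`. Each specialisation `f(c) ∈ 𝔽_p[t]` is
`a₀(t)` plus terms of `t`-degree at most `m - 1`, so it has degree exactly `m`, and the
product of the `p` factors has degree `m p`.
-/

-- `sylvesterMatrix f g` is the transpose of `Polynomial.sylvester f g` with rows and columns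
-- listed in reverse order.
theorem resultant_eq_polynomial_resultant {R : Type*} [CommRing R] (f g : R[X]) :
    _root_.resultant f g = Polynomial.resultant f g := by
  rw [_root_.resultant, Polynomial.resultant, ← Matrix.det_transpose,
    ← Matrix.det_submatrix_equiv_self Fin.revPerm]
  congr 1
  ext i j
  induction j using Fin.addCases <;>
  simp only [sylvesterMatrix, sylvester, Matrix.submatrix_apply, Matrix.transpose_apply,
    Matrix.of_apply, Fin.revPerm_apply, Fin.val_rev, Fin.addCases_left, Fin.addCases_right,
    Set.mem_Icc, Fin.val_castAdd, Fin.val_natAdd] <;>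
  split_ifs <;> first | rfl | (exfalso; omega) | (congr 1; omega)

theorem FiniteField.prod_X_sub_C_eq_X_pow_card_sub_X (K : Type*) [Field K] [Fintype K] :
    ∏ c : K, (X - C c) = X ^ Fintype.card K - X := by
  have hq := Fintype.one_lt_card (α := K)
  have hmonic : (X ^ Fintype.card K - X : K[X]).Monic :=
    monic_X_pow_sub (by rw [degree_X]; exact_mod_cast hq)
  rw [← prod_multiset_X_sub_C_of_monic_of_roots_card_eq hmonic,
    FiniteField.roots_X_pow_card_sub_X]
  · rfl
  · rw [FiniteField.roots_X_pow_card_sub_X, FiniteField.X_pow_card_sub_X_natDegree_eq K hq]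
    rfl

theorem resultant_X_pow_card_sub_X {K R : Type*} [Field K] [Fintype K] [CommRing R] [Algebra K R]
    (f : R[X]) :
    Polynomial.resultant f (X ^ Fintype.card K - X) =
      ∏ c : K, (-1) ^ f.natDegree * f.eval (algebraMap K R c) := by
  nontriviality R
  have hprod : (X ^ Fintype.card K - X : R[X]) = ∏ c : K, (X - C (algebraMap K R c)) := by
    simpa [Polynomial.map_prod] using
      congrArg (map (algebraMap K R)) (FiniteField.prod_X_sub_C_eq_X_pow_card_sub_X K).symm
  rw [hprod, resultant_prod_right _ _ _ _ le_rfl (by simp)]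
  refine Finset.prod_congr rfl fun c _ => ?_
  rw [← resultant_X_sub_C_right f _ _ le_rfl, natDegree_X_sub_C]

theorem degree_sum_mul_C_lt {R ι : Type*} [CommSemiring R] {d : WithBot ℕ} (hd : ⊥ < d)
    (s : Finset ι) (a : ι → R[X]) (b : ι → R) (h : ∀ i ∈ s, (a i).degree < d) :
    (∑ i ∈ s, a i * C (b i)).degree < d := by
  refine (degree_sum_le _ _).trans_lt ((Finset.sup_lt_iff hd).2 fun i hi => ?_)
  rw [mul_comm, ← smul_eq_C_mul]
  exact (degree_smul_le _ _).trans_lt (h i hi)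

theorem degree_eval_C_X_pow_add_sum {R : Type*} [CommSemiring R] (c : R) {n m : ℕ}
    (hn : 1 ≤ n) (hm : 1 ≤ m) (a : ℕ → R[X]) (h0 : (a 0).degree = m)
    (hi : ∀ i, 1 ≤ i → i ≤ n - 1 → (a i).degree < m) :
    ((X ^ n + ∑ i ∈ Finset.range n, C (a i) * X ^ i).eval (C c)).degree = m := by
  obtain ⟨k, rfl⟩ : ∃ k, n = k + 1 := ⟨n - 1, by omega⟩
  have hlow :
      (C (c ^ (k + 1)) + ∑ i ∈ Finset.range k, a (i + 1) * C (c ^ (i + 1))).degree < m := by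
    refine (degree_add_le _ _).trans_lt (max_lt ?_ ?_)
    · exact degree_C_le.trans_lt (WithBot.coe_lt_coe.2 hm)
    · refine degree_sum_mul_C_lt (WithBot.bot_lt_coe m) _ _ _ fun i hi' => ?_
      exact hi (i + 1) (Nat.le_add_left 1 i) (by simp at hi'; omega)
  have heval : (X ^ (k + 1) + ∑ i ∈ Finset.range (k + 1), C (a i) * X ^ i).eval (C c) =
      a 0 + (C (c ^ (k + 1)) + ∑ i ∈ Finset.range k, a (i + 1) * C (c ^ (i + 1))) := by
    simp only [eval_add, eval_pow, eval_X, eval_finsetSum, eval_mul, eval_C,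
      Finset.sum_range_succ' _ k, pow_zero, mul_one, C_pow]
    ring
  rw [heval, degree_add_eq_left_of_degree_lt (h0 ▸ hlow), h0]

/-- The degree of the resultant `g(t) = Res_x(f, X^p − X)` is exactly `m·p`, when the
constant coefficient (in `x`) of `f` has degree exactly `m` and all other non-leading
coefficients have degree at most `m − 1`. -/
theorem resultant_frobenius_degree (p m n : ℕ) [Fact p.Prime] (hm : 1 ≤ m) (hn : 1 ≤ n)
    (a : ℕ → Polynomial (ZMod p)) (f : Polynomial (Polynomial (ZMod p)))
    (hf : f = X ^ n + ∑ i ∈ Finset.range n, C (a i) * X ^ i)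
    (h0 : (a 0).degree = (m : ℕ))
    (hi : ∀ i, 1 ≤ i → i ≤ n - 1 → (a i).degree ≤ ((m - 1 : ℕ) : WithBot ℕ)) :
    _root_.resultant f (X ^ p - X) ≠ 0 ∧
      (_root_.resultant f (X ^ p - X)).degree = ((m * p : ℕ) : WithBot ℕ) := by
  have hres : _root_.resultant f (X ^ p - X) =
      ∏ c : ZMod p, (-1) ^ f.natDegree * f.eval (C c) := by
    have hcard : (X ^ p - X : (ZMod p)[X][X]) = X ^ Fintype.card (ZMod p) - X := by
      rw [ZMod.card]
    rw [hcard, resultant_eq_polynomial_resultant, resultant_X_pow_card_sub_X, algebraMap_eq]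
  have hfactor (c : ZMod p) : ((-1) ^ f.natDegree * f.eval (C c)).degree = m := by
    rw [← C_1, ← C_neg, ← C_pow, degree_C_mul (pow_ne_zero _ (neg_ne_zero.2 one_ne_zero)), hf]
    exact degree_eval_C_X_pow_add_sum c hn hm a h0 fun i h1 h2 =>
      (hi i h1 h2).trans_lt (by exact_mod_cast Nat.sub_lt hm one_pos)
  have hdeg : (_root_.resultant f (X ^ p - X)).degree = ((m * p : ℕ) : WithBot ℕ) := by
    simp [hres, degree_prod, hfactor, ZMod.card, mul_comm]
  exact ⟨fun h => by rw [h, degree_zero] at hdeg; exact WithBot.bot_ne_coe hdeg, hdeg⟩
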